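/- Let N ≥ 2, α ∈ (0,1), β ∈ (α,1), λ* > 0 and τ₁ := 1/(6λ*). Then there exists a constant c > 0, depending only on N, α, β and λ*, such that for every τ ∈ (−τ₁,τ₁) with τ ≠ 0, every u : ℝ^{N-1} → ℝ of class C^{1,β} with ‖u − λ*‖_{C^{1,β}} < λ*/2, and every v : ℝ^{N-1} → ℝ of class C^{1,β}, the function D(s) := − ∑_{q∈ℤ, q≠0} ∫_{ℝ^{N-1}} (v(s) − v(s−t)) / ( |t|² + (u(s) − u(s−t) − q/τ)² )^{(N+α)/2} dt + ∑_{q∈ℤ, q≠0} ∫_{ℝ^{N-1}} (v(s) + v(s−t)) / ( |t|² + (u(s) + u(s−t) − q/τ)² )^{(N+α)/2} dt satisfies |D(s)| ≤ c ‖v‖_{C^{1,β}} |τ|^{1+α} for all s ∈ ℝ^{N-1}, and |D(s) − D(s̄)| ≤ c ‖v‖_{C^{1,β}} |τ|^{1+α} |s − s̄|^{β−α} for all s, s̄ ∈ ℝ^{N-1}. -/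

import Mathlib

open MeasureTheory Real Filter Topology
open scoped Classical

noncomputable section

abbrev ES (m : ℕ) : Type := EuclideanSpace ℝ (Fin (m + 1))

/-- `u` is of class `C^{1,β}`. -/
def IsC1Beta {n : ℕ} (β : ℝ) (u : EuclideanSpace ℝ (Fin n) → ℝ) : Prop :=
  ContDiff ℝ 1 u ∧ (∃ C, ∀ x, |u x| ≤ C) ∧ (∃ C, ∀ x, ‖fderiv ℝ u x‖ ≤ C) ∧
    (∃ C, ∀ x y, ‖fderiv ℝ u x - fderiv ℝ u y‖ ≤ C * ‖x - y‖ ^ β)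

/-- The `β`-Hölder seminorm of the gradient of `u`. -/
def holderSemi {n : ℕ} (β : ℝ) (u : EuclideanSpace ℝ (Fin n) → ℝ) : ℝ :=
  ⨆ p : EuclideanSpace ℝ (Fin n) × EuclideanSpace ℝ (Fin n),
    if p.1 = p.2 then 0 else ‖fderiv ℝ u p.1 - fderiv ℝ u p.2‖ / ‖p.1 - p.2‖ ^ β

/-- The `C^{1,β}` norm: `sup |u| + sup |∇u| + [∇u]_β`. -/
def c1betaNorm {n : ℕ} (β : ℝ) (u : EuclideanSpace ℝ (Fin n) → ℝ) : ℝ :=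
  (⨆ x, |u x|) + (⨆ x, ‖fderiv ℝ u x‖) + holderSemi β u

/-- `D(s) = -∑_{q≠0} ∫ (v(s)-v(s-t))/(|t|²+(u(s)-u(s-t)-q/τ)²)^{(N+α)/2} dt
            + ∑_{q≠0} ∫ (v(s)+v(s-t))/(|t|²+(u(s)+u(s-t)-q/τ)²)^{(N+α)/2} dt`. -/
def Dlin (m : ℕ) (α : ℝ) (τ : ℝ) (u v : ES m → ℝ) (s : ES m) : ℝ :=
  -(∑' q : {q : ℤ // q ≠ 0},
      ∫ t : ES m, (v s - v (s - t)) /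
        (‖t‖ ^ 2 + (u s - u (s - t) - (q : ℤ) / τ) ^ 2) ^ (((m : ℝ) + 2 + α) / 2)) +
    ∑' q : {q : ℤ // q ≠ 0},
      ∫ t : ES m, (v s + v (s - t)) /
        (‖t‖ ^ 2 + (u s + u (s - t) - (q : ℤ) / τ) ^ 2) ^ (((m : ℝ) + 2 + α) / 2)

/-!
Write `N + α = 2p`. For `|u| ≤ 3λ*/2` and `6λ*|τ| < 1` the quantity `u(s) ± u(s-t) - q/τ` stays
at distance at least `A_q = |q|/(2|τ|)` from `0`, so the `q`-th integral is dominated by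
`∫ (|t|² + A_q²)^(-p) dt`, which by scaling equals `A_q^(-(1+α))` times a fixed constant. Summing
over `q ≠ 0` gives `|τ|^(1+α) ∑ |q|^(-(1+α))`. The same scaling, together with the mean value theorem
for `w ↦ (c + w²)^(-p)`, makes `D` Lipschitz with a constant of the same order, and interpolating
between the Lipschitz bound and the sup bound yields the Hölder bound with exponent `β - α ∈ [0, 1]`.
-/

open Module
lemma rpow_neg_le_of_le_abs {p c A w : ℝ} (hc : 0 ≤ c) (hp : 0 ≤ p) (hA : 0 < A)
    (hw : A ≤ |w|) : (c + w ^ 2) ^ (-p) ≤ (c + A ^ 2) ^ (-p) :=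
  Real.rpow_le_rpow_of_nonpos (by positivity)
    (by nlinarith [sq_abs w, abs_nonneg w]) (neg_nonpos.2 hp)

lemma abs_div_rpow_le {p c A M x w : ℝ} (hc : 0 ≤ c) (hp : 0 ≤ p) (hA : 0 < A)
    (hx : |x| ≤ M) (hw : A ≤ |w|) : |x / (c + w ^ 2) ^ p| ≤ M * (c + A ^ 2) ^ (-p) := by
  have hpos : 0 < c + w ^ 2 := by nlinarith [sq_abs w, abs_nonneg w]
  rw [div_eq_mul_inv, ← Real.rpow_neg hpos.le, abs_mul,
    abs_of_pos (Real.rpow_pos_of_pos hpos _)]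
  exact mul_le_mul hx (rpow_neg_le_of_le_abs hc hp hA hw) (by positivity)
    ((abs_nonneg x).trans hx)

lemma abs_rpow_neg_sub_rpow_neg_le {p c A x y : ℝ} (hc : 0 ≤ c) (hp : 0 ≤ p) (hA : 0 < A)
    (hxy : ∀ z ∈ Set.uIcc x y, A ≤ |z|) :
    |(c + x ^ 2) ^ (-p) - (c + y ^ 2) ^ (-p)| ≤ 2 * p * (c + A ^ 2) ^ (-(p + 1 / 2)) * |x - y| := by
  have hpos : ∀ z ∈ Set.uIcc x y, 0 < c + z ^ 2 := fun z hz => by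
    nlinarith [sq_abs z, hxy z hz]
  have hderiv : ∀ z ∈ Set.uIcc x y, HasDerivWithinAt (fun z : ℝ => (c + z ^ 2) ^ (-p))
      (-(2 * p * z * (c + z ^ 2) ^ (-p - 1))) (Set.uIcc x y) z := fun z hz => by
    have h := ((hasDerivAt_pow 2 z).const_add c).rpow_const (p := -p) (Or.inl (hpos z hz).ne')
    refine h.hasDerivWithinAt.congr_deriv ?_
    push_cast; ring
  have hbound : ∀ z ∈ Set.uIcc x y,
      ‖-(2 * p * z * (c + z ^ 2) ^ (-p - 1))‖ ≤ 2 * p * (c + A ^ 2) ^ (-(p + 1 / 2)) := by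
    intro z hz
    have hcz := hpos z hz
    have hz_le : |z| ≤ (c + z ^ 2) ^ (1 / 2 : ℝ) := by
      rw [← Real.sqrt_eq_rpow, ← Real.sqrt_sq_eq_abs]
      exact Real.sqrt_le_sqrt (by linarith)
    calc ‖-(2 * p * z * (c + z ^ 2) ^ (-p - 1))‖
        = 2 * p * |z| * (c + z ^ 2) ^ (-p - 1) := by
          rw [norm_neg, Real.norm_eq_abs, abs_mul, abs_mul, abs_of_nonneg (by positivity),
            abs_of_pos (Real.rpow_pos_of_pos hcz _)]
      _ ≤ 2 * p * (c + z ^ 2) ^ (1 / 2 : ℝ) * (c + z ^ 2) ^ (-p - 1) := by gcongr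
      _ = 2 * p * (c + z ^ 2) ^ (-(p + 1 / 2)) := by
          rw [mul_assoc, ← Real.rpow_add hcz]; ring_nf
      _ ≤ 2 * p * (c + A ^ 2) ^ (-(p + 1 / 2)) := by
          gcongr 2 * p * ?_
          exact rpow_neg_le_of_le_abs hc (by linarith) hA (hxy z hz)
  have h := (convex_uIcc x y).norm_image_sub_le_of_norm_hasDerivWithin_le hderiv hbound
    Set.right_mem_uIcc Set.left_mem_uIcc
  simpa only [Real.norm_eq_abs] using h
lemma abs_div_rpow_sub_div_rpow_le {p c A L M D x₁ x₂ w₁ w₂ : ℝ} (hc : 0 ≤ c) (hp : 0 ≤ p)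
    (hA : 0 < A) (hx : |x₁ - x₂| ≤ L) (hx₂ : |x₂| ≤ M) (hw : ∀ z ∈ Set.uIcc w₁ w₂, A ≤ |z|)
    (hwD : |w₁ - w₂| ≤ D) :
    |x₁ / (c + w₁ ^ 2) ^ p - x₂ / (c + w₂ ^ 2) ^ p|
      ≤ L * (c + A ^ 2) ^ (-p) + M * (2 * p * D) * (c + A ^ 2) ^ (-(p + 1 / 2)) := by
  have hw₁ : 0 < c + w₁ ^ 2 := by nlinarith [sq_abs w₁, hw w₁ Set.left_mem_uIcc]
  have hw₂ : 0 < c + w₂ ^ 2 := by nlinarith [sq_abs w₂, hw w₂ Set.right_mem_uIcc]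
  have hsplit : x₁ / (c + w₁ ^ 2) ^ p - x₂ / (c + w₂ ^ 2) ^ p
      = (x₁ - x₂) * (c + w₁ ^ 2) ^ (-p)
        + x₂ * ((c + w₁ ^ 2) ^ (-p) - (c + w₂ ^ 2) ^ (-p)) := by
    rw [Real.rpow_neg hw₁.le, Real.rpow_neg hw₂.le]; ring
  have hM : 0 ≤ M := (abs_nonneg _).trans hx₂
  have hmvt := abs_rpow_neg_sub_rpow_neg_le hc hp hA hw
  rw [hsplit]
  refine (abs_add_le _ _).trans (add_le_add ?_ ?_)
  · rw [abs_mul, abs_of_pos (Real.rpow_pos_of_pos hw₁ _)]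
    exact mul_le_mul hx (rpow_neg_le_of_le_abs hc hp hA (hw w₁ Set.left_mem_uIcc))
      (by positivity) ((abs_nonneg _).trans hx)
  · rw [abs_mul]
    calc |x₂| * |(c + w₁ ^ 2) ^ (-p) - (c + w₂ ^ 2) ^ (-p)|
        ≤ M * (2 * p * (c + A ^ 2) ^ (-(p + 1 / 2)) * D) := by gcongr; exact hmvt.trans (by gcongr)
      _ = M * (2 * p * D) * (c + A ^ 2) ^ (-(p + 1 / 2)) := by ring

lemma rpow_neg_norm_sq_add_sq_eq {E : Type*} [NormedAddCommGroup E] [NormedSpace ℝ E] {p A : ℝ}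
    (hA : 0 < A) (t : E) :
    (‖t‖ ^ 2 + A ^ 2) ^ (-p) = A ^ (-(2 * p)) * (1 + ‖A⁻¹ • t‖ ^ 2) ^ (-p) := by
  have hscale : ‖t‖ ^ 2 + A ^ 2 = A ^ 2 * (1 + ‖A⁻¹ • t‖ ^ 2) := by
    rw [norm_smul, Real.norm_of_nonneg (inv_nonneg.2 hA.le)]
    field_simp
    ring
  rw [hscale, Real.mul_rpow (by positivity) (by positivity), ← Real.rpow_natCast,
    ← Real.rpow_mul hA.le]
  push_cast; ring_nf

section Kernel

variable {E : Type*} [NormedAddCommGroup E] [MeasurableSpace E] (μ : Measure E)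

def bracketIntegral (p : ℝ) : ℝ := ∫ t, (1 + ‖t‖ ^ 2) ^ (-p) ∂μ

lemma bracketIntegral_nonneg (p : ℝ) : 0 ≤ bracketIntegral μ p :=
  integral_nonneg fun _ => by positivity

variable [NormedSpace ℝ E] [FiniteDimensional ℝ E] [BorelSpace E] [μ.IsAddHaarMeasure]

lemma integrable_rpow_neg_norm_sq_add_sq {p A : ℝ} (hp : (finrank ℝ E : ℝ) < 2 * p)
    (hA : 0 < A) : Integrable (fun t : E => (‖t‖ ^ 2 + A ^ 2) ^ (-p)) μ := by
  have h := (integrable_rpow_neg_one_add_norm_sq (μ := μ) hp).comp_smul (inv_ne_zero hA.ne')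
  simp only [neg_div, mul_div_cancel_left₀ p two_ne_zero] at h
  simpa only [rpow_neg_norm_sq_add_sq_eq hA] using h.const_mul (A ^ (-(2 * p)))

lemma integral_rpow_neg_norm_sq_add_sq {p A : ℝ} (hA : 0 < A) :
    ∫ t, (‖t‖ ^ 2 + A ^ 2) ^ (-p) ∂μ = A ^ ((finrank ℝ E : ℝ) - 2 * p) * bracketIntegral μ p := by
  simp_rw [rpow_neg_norm_sq_add_sq_eq (p := p) hA]
  rw [integral_const_mul, Measure.integral_comp_inv_smul μ (fun t : E => (1 + ‖t‖ ^ 2) ^ (-p)),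
    smul_eq_mul, abs_of_pos (pow_pos hA _), ← mul_assoc, ← Real.rpow_natCast,
    ← Real.rpow_add hA, bracketIntegral]
  ring_nf
lemma integrable_div_rpow {p A M : ℝ} {f g : E → ℝ} (hp : (finrank ℝ E : ℝ) < 2 * p)
    (hA : 0 < A) (hf : Measurable f) (hg : Measurable g) (hfM : ∀ t, |f t| ≤ M)
    (hgA : ∀ t, A ≤ |g t|) : Integrable (fun t => f t / (‖t‖ ^ 2 + g t ^ 2) ^ p) μ := by
  have hp0 : 0 ≤ p := by linarith [(finrank ℝ E).cast_nonneg (α := ℝ)]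
  refine ((integrable_rpow_neg_norm_sq_add_sq μ hp hA).const_mul M).mono'
    (Measurable.aestronglyMeasurable (by fun_prop)) (ae_of_all _ fun t => ?_)
  exact abs_div_rpow_le (by positivity) hp0 hA (hfM t) (hgA t)

lemma abs_integral_div_rpow_le {p A M : ℝ} {f g : E → ℝ} (hp : (finrank ℝ E : ℝ) < 2 * p)
    (hA : 0 < A) (hfM : ∀ t, |f t| ≤ M) (hgA : ∀ t, A ≤ |g t|) :
    |∫ t, f t / (‖t‖ ^ 2 + g t ^ 2) ^ p ∂μ|
      ≤ M * A ^ ((finrank ℝ E : ℝ) - 2 * p) * bracketIntegral μ p := by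
  have hp0 : 0 ≤ p := by linarith [(finrank ℝ E).cast_nonneg (α := ℝ)]
  calc |∫ t, f t / (‖t‖ ^ 2 + g t ^ 2) ^ p ∂μ|
      ≤ ∫ t, M * (‖t‖ ^ 2 + A ^ 2) ^ (-p) ∂μ := by
        rw [← Real.norm_eq_abs]
        exact norm_integral_le_of_norm_le ((integrable_rpow_neg_norm_sq_add_sq μ hp hA).const_mul M)
          (ae_of_all _ fun t => abs_div_rpow_le (sq_nonneg ‖t‖) hp0 hA (hfM t) (hgA t))
    _ = M * A ^ ((finrank ℝ E : ℝ) - 2 * p) * bracketIntegral μ p := by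
        rw [integral_const_mul, integral_rpow_neg_norm_sq_add_sq μ hA, mul_assoc]

lemma abs_integral_div_rpow_sub_le {p A L M D : ℝ} {f₁ f₂ g₁ g₂ : E → ℝ}
    (hp : (finrank ℝ E : ℝ) < 2 * p) (hA : 0 < A) (hf₁ : Measurable f₁) (hf₂ : Measurable f₂)
    (hg₁ : Measurable g₁) (hg₂ : Measurable g₂) (hf : ∀ t, |f₁ t - f₂ t| ≤ L)
    (hf₁M : ∀ t, |f₁ t| ≤ M) (hf₂M : ∀ t, |f₂ t| ≤ M)
    (hgA : ∀ t, ∀ z ∈ Set.uIcc (g₁ t) (g₂ t), A ≤ |z|) (hg : ∀ t, |g₁ t - g₂ t| ≤ D) :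
    |∫ t, f₁ t / (‖t‖ ^ 2 + g₁ t ^ 2) ^ p ∂μ - ∫ t, f₂ t / (‖t‖ ^ 2 + g₂ t ^ 2) ^ p ∂μ|
      ≤ L * A ^ ((finrank ℝ E : ℝ) - 2 * p) * bracketIntegral μ p
        + M * (2 * p * D) * A ^ ((finrank ℝ E : ℝ) - 2 * (p + 1 / 2))
          * bracketIntegral μ (p + 1 / 2) := by
  have hp0 : 0 ≤ p := by linarith [(finrank ℝ E).cast_nonneg (α := ℝ)]
  have hK₁ := integrable_rpow_neg_norm_sq_add_sq μ hp hA
  have hK₂ := integrable_rpow_neg_norm_sq_add_sq μ (p := p + 1 / 2) (by linarith) hA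
  rw [← integral_sub
    (integrable_div_rpow μ hp hA hf₁ hg₁ hf₁M fun t => hgA t _ Set.left_mem_uIcc)
    (integrable_div_rpow μ hp hA hf₂ hg₂ hf₂M fun t => hgA t _ Set.right_mem_uIcc)]
  calc |∫ t, (f₁ t / (‖t‖ ^ 2 + g₁ t ^ 2) ^ p - f₂ t / (‖t‖ ^ 2 + g₂ t ^ 2) ^ p) ∂μ|
      ≤ ∫ t, (L * (‖t‖ ^ 2 + A ^ 2) ^ (-p)
          + M * (2 * p * D) * (‖t‖ ^ 2 + A ^ 2) ^ (-(p + 1 / 2))) ∂μ := by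
        rw [← Real.norm_eq_abs]
        exact norm_integral_le_of_norm_le ((hK₁.const_mul _).add (hK₂.const_mul _))
          (ae_of_all _ fun t => abs_div_rpow_sub_div_rpow_le (sq_nonneg ‖t‖) hp0 hA (hf t)
            (hf₂M t) (hgA t) (hg t))
    _ = _ := by
        rw [integral_add (hK₁.const_mul _) (hK₂.const_mul _), integral_const_mul,
          integral_const_mul, integral_rpow_neg_norm_sq_add_sq μ hA,
          integral_rpow_neg_norm_sq_add_sq μ hA]
        ring

end Kernel

lemma abs_int_div_le_abs_sub {τ R z : ℝ} {q : ℤ} (hq : q ≠ 0) (hτ : τ ≠ 0)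
    (hR : 2 * R * |τ| ≤ 1) (hz : |z| ≤ R) : |(q : ℝ)| / (2 * |τ|) ≤ |z - q / τ| := by
  have hτ' : 0 < |τ| := abs_pos.2 hτ
  have hq1 : (1 : ℝ) ≤ |(q : ℝ)| := by exact_mod_cast Int.one_le_abs hq
  have hRq : R ≤ |(q : ℝ)| / (2 * |τ|) := by
    rw [le_div_iff₀ (by positivity)]; nlinarith
  have hsub : |(q : ℝ) / τ| - |z| ≤ |z - q / τ| := by
    rw [abs_sub_comm]; exact abs_sub_abs_le_abs_sub _ _
  have hhalf : |(q : ℝ) / τ| = 2 * (|(q : ℝ)| / (2 * |τ|)) := by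
    rw [abs_div]; field_simp
  linarith

lemma div_rpow_neg_eq_mul {a b r : ℝ} (ha : 0 ≤ a) (hb : 0 ≤ b) :
    (a / b) ^ (-r) = b ^ r * a ^ (-r) := by
  rw [Real.div_rpow ha hb, Real.rpow_neg hb, div_inv_eq_mul, mul_comm]

section Lattice

variable {E : Type*} [NormedAddCommGroup E] [MeasurableSpace E] (μ : Measure E)

def latticeTerm (p τ : ℝ) (f g : E → ℝ) (q : ℤ) : ℝ :=
  ∫ t, f t / (‖t‖ ^ 2 + (g t - q / τ) ^ 2) ^ p ∂μ

def latticeSum (p τ : ℝ) (f g : E → ℝ) : ℝ :=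
  ∑' q : {q : ℤ // q ≠ 0}, latticeTerm μ p τ f g q

variable [NormedSpace ℝ E] [FiniteDimensional ℝ E] [BorelSpace E] [μ.IsAddHaarMeasure]

lemma abs_latticeTerm_le {p α τ M R : ℝ} {f g : E → ℝ} {q : ℤ}
    (hp : 2 * p = finrank ℝ E + 1 + α) (hα : 0 < 1 + α) (hτ : τ ≠ 0) (hR : 2 * R * |τ| ≤ 1)
    (hq : q ≠ 0) (hf : ∀ t, |f t| ≤ M) (hg : ∀ t, |g t| ≤ R) :
    |latticeTerm μ p τ f g q|
      ≤ M * bracketIntegral μ p * (2 * |τ|) ^ (1 + α) * |(q : ℝ)| ^ (-(1 + α)) := by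
  have hA : 0 < |(q : ℝ)| / (2 * |τ|) := by positivity
  have h := abs_integral_div_rpow_le μ (p := p) (g := fun t => g t - q / τ) (by linarith) hA hf
    fun t => abs_int_div_le_abs_sub hq hτ hR (hg t)
  rw [show (finrank ℝ E : ℝ) - 2 * p = -(1 + α) by linarith, div_rpow_neg_eq_mul (abs_nonneg _) (by positivity)] at h
  unfold latticeTerm
  linarith

lemma abs_latticeTerm_sub_le {p α τ L M R D : ℝ} {f₁ f₂ g₁ g₂ : E → ℝ} {q : ℤ}
    (hp : 2 * p = finrank ℝ E + 1 + α) (hα : 0 < 1 + α) (hτ : τ ≠ 0) (hR : 2 * R * |τ| ≤ 1)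
    (hq : q ≠ 0) (hf₁ : Measurable f₁) (hf₂ : Measurable f₂) (hg₁ : Measurable g₁)
    (hg₂ : Measurable g₂) (hf : ∀ t, |f₁ t - f₂ t| ≤ L) (hf₁M : ∀ t, |f₁ t| ≤ M)
    (hf₂M : ∀ t, |f₂ t| ≤ M) (hg₁R : ∀ t, |g₁ t| ≤ R) (hg₂R : ∀ t, |g₂ t| ≤ R)
    (hg : ∀ t, |g₁ t - g₂ t| ≤ D) :
    |latticeTerm μ p τ f₁ g₁ q - latticeTerm μ p τ f₂ g₂ q|
      ≤ (L * bracketIntegral μ p + 4 * p * M * D * |τ| * bracketIntegral μ (p + 1 / 2))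
        * (2 * |τ|) ^ (1 + α) * |(q : ℝ)| ^ (-(1 + α)) := by
  set A := |(q : ℝ)| / (2 * |τ|) with hA_def
  have hA : 0 < A := by positivity
  have hseg : ∀ t, ∀ z ∈ Set.uIcc (g₁ t - q / τ) (g₂ t - q / τ), A ≤ |z| := by
    intro t z hz
    have hmem : ∀ y, |y| ≤ R → y - q / τ ∈ Set.Icc (-R - q / τ) (R - q / τ) := fun y hy => by
      rw [abs_le] at hy; constructor <;> linarith
    obtain ⟨hz₁, hz₂⟩ := Set.uIcc_subset_Icc (hmem _ (hg₁R t)) (hmem _ (hg₂R t)) hz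
    simpa using abs_int_div_le_abs_sub hq hτ hR (z := z + q / τ)
      (abs_le.2 ⟨by linarith, by linarith⟩)
  have h := abs_integral_div_rpow_sub_le μ (p := p) (g₁ := fun t => g₁ t - q / τ)
    (g₂ := fun t => g₂ t - q / τ) (by linarith) hA hf₁ hf₂ (by fun_prop) (by fun_prop) hf hf₁M
    hf₂M hseg fun t => by simpa only [sub_sub_sub_cancel_right] using hg t
  rw [show (finrank ℝ E : ℝ) - 2 * p = -(1 + α) by linarith,
    show (finrank ℝ E : ℝ) - 2 * (p + 1 / 2) = -(1 + α) + -1 by linarith,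
    Real.rpow_add hA, Real.rpow_neg_one, hA_def, div_rpow_neg_eq_mul (abs_nonneg _) (by positivity)] at h
  have hinv : (|(q : ℝ)| / (2 * |τ|))⁻¹ ≤ 2 * |τ| := by
    have hq1 : (1 : ℝ) ≤ |(q : ℝ)| := by exact_mod_cast Int.one_le_abs hq
    rw [inv_div]; exact div_le_self (by positivity) hq1
  have hM : 0 ≤ M := (abs_nonneg _).trans (hf₁M 0)
  have hD : 0 ≤ D := (abs_nonneg _).trans (hg 0)
  have hp0 : 0 ≤ p := by linarith [(finrank ℝ E).cast_nonneg (α := ℝ)]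
  have hJ := bracketIntegral_nonneg μ (p + 1 / 2)
  refine h.trans ?_
  calc _ ≤ L * ((2 * |τ|) ^ (1 + α) * |(q : ℝ)| ^ (-(1 + α))) * bracketIntegral μ p
        + M * (2 * p * D) * ((2 * |τ|) ^ (1 + α) * |(q : ℝ)| ^ (-(1 + α)) * (2 * |τ|))
          * bracketIntegral μ (p + 1 / 2) := by gcongr
    _ = _ := by ring

lemma summable_abs_int_rpow_neg {α : ℝ} (hα : 0 < α) :
    Summable fun q : {q : ℤ // q ≠ 0} => |(q : ℝ)| ^ (-(1 + α)) :=
  (Real.summable_abs_int_rpow (by linarith)).subtype _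

lemma summable_latticeTerm {p α τ M R : ℝ} {f g : E → ℝ}
    (hp : 2 * p = finrank ℝ E + 1 + α) (hα : 0 < α) (hτ : τ ≠ 0) (hR : 2 * R * |τ| ≤ 1)
    (hf : ∀ t, |f t| ≤ M) (hg : ∀ t, |g t| ≤ R) :
    Summable fun q : {q : ℤ // q ≠ 0} => latticeTerm μ p τ f g q :=
  .of_norm_bounded ((summable_abs_int_rpow_neg hα).mul_left _)
    fun q => abs_latticeTerm_le μ hp (by linarith) hτ hR q.2 hf hg

lemma abs_latticeSum_le {p α τ M R : ℝ} {f g : E → ℝ}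
    (hp : 2 * p = finrank ℝ E + 1 + α) (hα : 0 < α) (hτ : τ ≠ 0) (hR : 2 * R * |τ| ≤ 1)
    (hf : ∀ t, |f t| ≤ M) (hg : ∀ t, |g t| ≤ R) :
    |latticeSum μ p τ f g| ≤ M * bracketIntegral μ p * (2 * |τ|) ^ (1 + α)
      * ∑' q : {q : ℤ // q ≠ 0}, |(q : ℝ)| ^ (-(1 + α)) := by
  rw [latticeSum, ← Real.norm_eq_abs]
  exact tsum_of_norm_bounded ((summable_abs_int_rpow_neg hα).hasSum.mul_left _)
    fun q => abs_latticeTerm_le μ hp (by linarith) hτ hR q.2 hf hg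

lemma abs_latticeSum_sub_le {p α τ L M R D : ℝ} {f₁ f₂ g₁ g₂ : E → ℝ}
    (hp : 2 * p = finrank ℝ E + 1 + α) (hα : 0 < α) (hτ : τ ≠ 0) (hR : 2 * R * |τ| ≤ 1)
    (hf₁ : Measurable f₁) (hf₂ : Measurable f₂) (hg₁ : Measurable g₁)
    (hg₂ : Measurable g₂) (hf : ∀ t, |f₁ t - f₂ t| ≤ L) (hf₁M : ∀ t, |f₁ t| ≤ M)
    (hf₂M : ∀ t, |f₂ t| ≤ M) (hg₁R : ∀ t, |g₁ t| ≤ R) (hg₂R : ∀ t, |g₂ t| ≤ R)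
    (hg : ∀ t, |g₁ t - g₂ t| ≤ D) :
    |latticeSum μ p τ f₁ g₁ - latticeSum μ p τ f₂ g₂|
      ≤ (L * bracketIntegral μ p + 4 * p * M * D * |τ| * bracketIntegral μ (p + 1 / 2))
        * (2 * |τ|) ^ (1 + α) * ∑' q : {q : ℤ // q ≠ 0}, |(q : ℝ)| ^ (-(1 + α)) := by
  rw [latticeSum, latticeSum, ← Summable.tsum_sub (summable_latticeTerm μ hp hα hτ hR hf₁M hg₁R)
    (summable_latticeTerm μ hp hα hτ hR hf₂M hg₂R), ← Real.norm_eq_abs]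
  exact tsum_of_norm_bounded ((summable_abs_int_rpow_neg hα).hasSum.mul_left _)
    fun q => abs_latticeTerm_sub_le μ hp (by linarith) hτ hR q.2 hf₁ hf₂ hg₁ hg₂ hf hf₁M hf₂M
      hg₁R hg₂R hg

end Lattice

section Shift

variable {E : Type*} [NormedAddCommGroup E]

lemma abs_add_mul_comp_sub_le {ε B : ℝ} {w : E → ℝ} (hε : |ε| ≤ 1) (hw : ∀ x, |w x| ≤ B)
    (s t : E) : |w s + ε * w (s - t)| ≤ 2 * B := by
  calc |w s + ε * w (s - t)| ≤ |w s| + |ε| * |w (s - t)| := by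
        rw [← abs_mul]; exact abs_add_le _ _
    _ ≤ B + 1 * B := by gcongr; exacts [hw s, hw _]
    _ = 2 * B := by ring

lemma abs_add_mul_comp_sub_sub_le {ε K : ℝ} {w : E → ℝ} (hε : |ε| ≤ 1)
    (hw : ∀ x y, |w x - w y| ≤ K * ‖x - y‖) (s s' t : E) :
    |(w s + ε * w (s - t)) - (w s' + ε * w (s' - t))| ≤ 2 * K * ‖s - s'‖ := by
  have hshift := hw (s - t) (s' - t)
  rw [sub_sub_sub_cancel_right] at hshift
  calc |(w s + ε * w (s - t)) - (w s' + ε * w (s' - t))|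
      ≤ |w s - w s'| + |ε| * |w (s - t) - w (s' - t)| := by
        rw [← abs_mul, show (w s + ε * w (s - t)) - (w s' + ε * w (s' - t))
          = (w s - w s') + ε * (w (s - t) - w (s' - t)) by ring]
        exact abs_add_le _ _
    _ ≤ K * ‖s - s'‖ + 1 * (K * ‖s - s'‖) := by gcongr; exact hw s s'
    _ = 2 * K * ‖s - s'‖ := by ring

variable [MeasurableSpace E] (μ : Measure E)

def shiftLatticeSum (p τ ε : ℝ) (u v : E → ℝ) (s : E) : ℝ :=
  latticeSum μ p τ (fun t => v s + ε * v (s - t)) (fun t => u s + ε * u (s - t))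

def latticeConst (p α : ℝ) : ℝ :=
  (bracketIntegral μ p + 4 * p * bracketIntegral μ (p + 1 / 2)) * 2 ^ (1 + α)
    * ∑' q : {q : ℤ // q ≠ 0}, |(q : ℝ)| ^ (-(1 + α))

lemma latticeConst_nonneg {p : ℝ} (hp : 0 ≤ p) (α : ℝ) : 0 ≤ latticeConst μ p α := by
  have := bracketIntegral_nonneg μ p
  have := bracketIntegral_nonneg μ (p + 1 / 2)
  have : 0 ≤ ∑' q : {q : ℤ // q ≠ 0}, |(q : ℝ)| ^ (-(1 + α)) := tsum_nonneg fun _ => by positivity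
  unfold latticeConst; positivity

variable [NormedSpace ℝ E] [FiniteDimensional ℝ E] [BorelSpace E] [μ.IsAddHaarMeasure]

lemma abs_shiftLatticeSum_le {p α τ ε M R : ℝ} {u v : E → ℝ}
    (hp : 2 * p = finrank ℝ E + 1 + α) (hα : 0 < α) (hτ : τ ≠ 0) (hR : 4 * R * |τ| ≤ 1)
    (hε : |ε| ≤ 1) (hv : ∀ x, |v x| ≤ M) (hu : ∀ x, |u x| ≤ R) (s : E) :
    |shiftLatticeSum μ p τ ε u v s| ≤ 2 * M * latticeConst μ p α * |τ| ^ (1 + α) := by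
  have h := abs_latticeSum_le μ hp hα hτ (R := 2 * R) (by linarith)
    (abs_add_mul_comp_sub_le hε hv s) (abs_add_mul_comp_sub_le hε hu s)
  have hM : 0 ≤ M := (abs_nonneg _).trans (hv 0)
  have hp0 : 0 ≤ p := by linarith [(finrank ℝ E).cast_nonneg (α := ℝ)]
  have := bracketIntegral_nonneg μ (p + 1 / 2)
  have : 0 ≤ ∑' q : {q : ℤ // q ≠ 0}, |(q : ℝ)| ^ (-(1 + α)) := tsum_nonneg fun _ => by positivity
  rw [Real.mul_rpow zero_le_two (abs_nonneg τ)] at h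
  refine h.trans ?_
  calc _ = 2 * M * (bracketIntegral μ p * 2 ^ (1 + α)
          * ∑' q : {q : ℤ // q ≠ 0}, |(q : ℝ)| ^ (-(1 + α))) * |τ| ^ (1 + α) := by ring
    _ ≤ 2 * M * latticeConst μ p α * |τ| ^ (1 + α) := by
        unfold latticeConst; gcongr; exact le_add_of_nonneg_right (by positivity)

lemma abs_shiftLatticeSum_sub_le {p α τ ε M R K : ℝ} {u v : E → ℝ}
    (hp : 2 * p = finrank ℝ E + 1 + α) (hα : 0 < α) (hτ : τ ≠ 0) (hR : 4 * R * |τ| ≤ 1)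
    (hK : 2 * K * |τ| ≤ 1) (hε : |ε| ≤ 1) (hu_meas : Measurable u) (hv_meas : Measurable v)
    (hv : ∀ x, |v x| ≤ M) (hv_lip : ∀ x y, |v x - v y| ≤ M * ‖x - y‖) (hu : ∀ x, |u x| ≤ R)
    (hu_lip : ∀ x y, |u x - u y| ≤ K * ‖x - y‖) (s s' : E) :
    |shiftLatticeSum μ p τ ε u v s - shiftLatticeSum μ p τ ε u v s'|
      ≤ 2 * M * latticeConst μ p α * |τ| ^ (1 + α) * ‖s - s'‖ := by
  have h := abs_latticeSum_sub_le μ hp hα hτ (R := 2 * R) (by linarith) (by fun_prop)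
    (by fun_prop) (by fun_prop) (by fun_prop) (abs_add_mul_comp_sub_sub_le hε hv_lip s s')
    (abs_add_mul_comp_sub_le hε hv s) (abs_add_mul_comp_sub_le hε hv s')
    (abs_add_mul_comp_sub_le hε hu s) (abs_add_mul_comp_sub_le hε hu s')
    (abs_add_mul_comp_sub_sub_le hε hu_lip s s')
  have hM : 0 ≤ M := (abs_nonneg _).trans (hv 0)
  have hp0 : 0 ≤ p := by linarith [(finrank ℝ E).cast_nonneg (α := ℝ)]
  have := bracketIntegral_nonneg μ (p + 1 / 2)
  have hY : 0 ≤ 2 * M * ‖s - s'‖ * (4 * p * bracketIntegral μ (p + 1 / 2)) := by positivity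
  rw [Real.mul_rpow zero_le_two (abs_nonneg τ)] at h
  refine h.trans ?_
  calc _ ≤ 2 * M * ‖s - s'‖ * (bracketIntegral μ p + 4 * p * bracketIntegral μ (p + 1 / 2))
          * (2 ^ (1 + α) * |τ| ^ (1 + α)) * ∑' q : {q : ℤ // q ≠ 0}, |(q : ℝ)| ^ (-(1 + α)) := by
        gcongr ?_ * _ * _
        nlinarith [mul_le_mul_of_nonneg_left hK hY]
    _ = _ := by unfold latticeConst; ring

end Shift

lemma le_mul_rpow_of_le_of_le_mul {x a δ γ : ℝ} (ha : 0 ≤ a) (hδ : 0 ≤ δ) (hγ₀ : 0 ≤ γ)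
    (hγ₁ : γ ≤ 1) (h₁ : x ≤ a) (h₂ : x ≤ a * δ) : x ≤ a * δ ^ γ := by
  rcases le_total δ 1 with hδ₁ | hδ₁
  · exact h₂.trans (by gcongr; exact Real.self_le_rpow_of_le_one hδ hδ₁ hγ₁)
  · exact h₁.trans (le_mul_of_one_le_right ha (Real.one_le_rpow hδ₁ hγ₀))

section C1Beta

variable {n : ℕ} {β : ℝ}

lemma holderSemi_nonneg (u : EuclideanSpace ℝ (Fin n) → ℝ) : 0 ≤ holderSemi β u :=
  Real.iSup_nonneg fun _ => by split_ifs <;> positivity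

lemma c1betaNorm_nonneg (u : EuclideanSpace ℝ (Fin n) → ℝ) : 0 ≤ c1betaNorm β u :=
  add_nonneg (add_nonneg (Real.iSup_nonneg fun _ => abs_nonneg _)
    (Real.iSup_nonneg fun _ => norm_nonneg _)) (holderSemi_nonneg u)

variable {u : EuclideanSpace ℝ (Fin n) → ℝ}

lemma IsC1Beta.abs_le_c1betaNorm (hu : IsC1Beta β u) (x : EuclideanSpace ℝ (Fin n)) :
    |u x| ≤ c1betaNorm β u := by
  obtain ⟨-, ⟨C, hC⟩, -, -⟩ := hu
  have hsup : |u x| ≤ ⨆ x, |u x| := le_ciSup ⟨C, by rintro _ ⟨y, rfl⟩; exact hC y⟩ x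
  have := Real.iSup_nonneg fun x => norm_nonneg (fderiv ℝ u x)
  have := holderSemi_nonneg (β := β) u
  unfold c1betaNorm; linarith

lemma IsC1Beta.abs_sub_le_c1betaNorm_mul (hu : IsC1Beta β u) (x y : EuclideanSpace ℝ (Fin n)) :
    |u x - u y| ≤ c1betaNorm β u * ‖x - y‖ := by
  obtain ⟨hC1, -, ⟨C, hC⟩, -⟩ := hu
  have hsup : ∀ z, ‖fderiv ℝ u z‖ ≤ ⨆ z, ‖fderiv ℝ u z‖ :=
    le_ciSup ⟨C, by rintro _ ⟨z, rfl⟩; exact hC z⟩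
  have hmvt := convex_univ.norm_image_sub_le_of_norm_fderiv_le
    (fun z _ => (hC1.differentiable one_ne_zero).differentiableAt) (fun z _ => hsup z)
    (Set.mem_univ y) (Set.mem_univ x)
  rw [Real.norm_eq_abs] at hmvt
  refine hmvt.trans (mul_le_mul_of_nonneg_right ?_ (norm_nonneg _))
  have := Real.iSup_nonneg fun x => abs_nonneg (u x)
  have := holderSemi_nonneg (β := β) u
  unfold c1betaNorm; linarith

lemma IsC1Beta.sub_const (hu : IsC1Beta β u) (a : ℝ) : IsC1Beta β (fun x => u x - a) := by
  obtain ⟨hC1, ⟨C₀, h₀⟩, ⟨C₁, h₁⟩, ⟨C₂, h₂⟩⟩ := hu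
  have hfd : fderiv ℝ (fun x => u x - a) = fderiv ℝ u := funext fun x => fderiv_sub_const _
  exact ⟨hC1.sub contDiff_const, ⟨C₀ + |a|, fun x => (abs_sub _ _).trans (by linarith [h₀ x])⟩,
    ⟨C₁, by rwa [hfd]⟩, ⟨C₂, by rwa [hfd]⟩⟩

lemma IsC1Beta.abs_le_of_c1betaNorm_sub_const_le {a r : ℝ} (hu : IsC1Beta β u)
    (h : c1betaNorm β (fun x => u x - a) ≤ r) (x : EuclideanSpace ℝ (Fin n)) :
    |u x| ≤ |a| + r := by
  have := ((hu.sub_const a).abs_le_c1betaNorm x).trans h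
  calc |u x| = |(u x - a) + a| := by ring_nf
    _ ≤ |u x - a| + |a| := abs_add_le _ _
    _ ≤ |a| + r := by linarith

lemma IsC1Beta.abs_sub_le_of_c1betaNorm_sub_const_le {a r : ℝ} (hu : IsC1Beta β u)
    (h : c1betaNorm β (fun x => u x - a) ≤ r) (x y : EuclideanSpace ℝ (Fin n)) :
    |u x - u y| ≤ r * ‖x - y‖ := by
  simpa using ((hu.sub_const a).abs_sub_le_c1betaNorm_mul x y).trans
    (mul_le_mul_of_nonneg_right h (norm_nonneg _))

end C1Beta

section Dlin

variable {m : ℕ} {α τ : ℝ} {u v : ES m → ℝ}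

def DlinConst (m : ℕ) (α : ℝ) : ℝ :=
  latticeConst (volume : Measure (ES m)) (((m : ℝ) + 2 + α) / 2) α

lemma DlinConst_nonneg (m : ℕ) (hα : 0 ≤ α) : 0 ≤ DlinConst m α :=
  latticeConst_nonneg _ (by positivity) α

lemma two_mul_Dlin_exponent (m : ℕ) (α : ℝ) :
    2 * (((m : ℝ) + 2 + α) / 2) = finrank ℝ (ES m) + 1 + α := by
  rw [finrank_euclideanSpace_fin]; push_cast; ring

lemma Dlin_eq (s : ES m) :
    Dlin m α τ u v s = -shiftLatticeSum volume (((m : ℝ) + 2 + α) / 2) τ (-1) u v s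
      + shiftLatticeSum volume (((m : ℝ) + 2 + α) / 2) τ 1 u v s := by
  simp [Dlin, shiftLatticeSum, latticeSum, latticeTerm, sub_eq_add_neg]

lemma abs_Dlin_le {M R : ℝ} (hα : 0 < α) (hτ : τ ≠ 0) (hR : 4 * R * |τ| ≤ 1)
    (hv : ∀ x, |v x| ≤ M) (hu : ∀ x, |u x| ≤ R) (s : ES m) :
    |Dlin m α τ u v s| ≤ 4 * M * DlinConst m α * |τ| ^ (1 + α) := by
  have hp := two_mul_Dlin_exponent m α
  have h_sub := abs_shiftLatticeSum_le volume hp hα hτ hR (ε := -1) (by norm_num) hv hu s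
  have h_add := abs_shiftLatticeSum_le volume hp hα hτ hR (ε := 1) (by norm_num) hv hu s
  rw [Dlin_eq, DlinConst]
  refine (abs_add_le _ _).trans ?_
  rw [abs_neg]
  linarith

lemma abs_Dlin_sub_le {M R K : ℝ} (hα : 0 < α) (hτ : τ ≠ 0) (hR : 4 * R * |τ| ≤ 1)
    (hK : 2 * K * |τ| ≤ 1) (hu_cont : Continuous u) (hv_cont : Continuous v)
    (hv : ∀ x, |v x| ≤ M) (hv_lip : ∀ x y, |v x - v y| ≤ M * ‖x - y‖)
    (hu : ∀ x, |u x| ≤ R) (hu_lip : ∀ x y, |u x - u y| ≤ K * ‖x - y‖) (s s' : ES m) :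
    |Dlin m α τ u v s - Dlin m α τ u v s'|
      ≤ 4 * M * DlinConst m α * |τ| ^ (1 + α) * ‖s - s'‖ := by
  have hp := two_mul_Dlin_exponent m α
  have h_sub := abs_shiftLatticeSum_sub_le volume hp hα hτ hR hK (ε := -1) (by norm_num)
    hu_cont.measurable hv_cont.measurable hv hv_lip hu hu_lip s s'
  have h_add := abs_shiftLatticeSum_sub_le volume hp hα hτ hR hK (ε := 1) (by norm_num)
    hu_cont.measurable hv_cont.measurable hv hv_lip hu hu_lip s s'
  rw [Dlin_eq, Dlin_eq, DlinConst]
  rw [abs_le] at h_sub h_add ⊢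
  constructor <;> linarith [h_sub.1, h_sub.2, h_add.1, h_add.2]

end Dlin

theorem statement_16_general (m : ℕ) (α β lamStar : ℝ) (hα : α ∈ Set.Ioo (0 : ℝ) 1)
    (hβ : β ∈ Set.Ioo α 1) :
    ∃ c > 0, ∀ τ : ℝ, τ ≠ 0 → |τ| < 1 / (6 * lamStar) →
      ∀ u v : ES m → ℝ, IsC1Beta β u →
        c1betaNorm β (fun x => u x - lamStar) < lamStar / 2 → IsC1Beta β v →
        (∀ s : ES m, |Dlin m α τ u v s| ≤ c * c1betaNorm β v * |τ| ^ (1 + α)) ∧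
        ∀ s sbar : ES m,
          |Dlin m α τ u v s - Dlin m α τ u v sbar|
            ≤ c * c1betaNorm β v * |τ| ^ (1 + α) * ‖s - sbar‖ ^ (β - α) := by
  obtain ⟨hα₀, -⟩ := hα
  obtain ⟨hαβ, hβ₁⟩ := hβ
  have hC := DlinConst_nonneg m hα₀.le
  refine ⟨8 * DlinConst m α + 1, by positivity, fun τ hτ hτ₁ u v hu hunorm hv => ?_⟩
  have hlam : 0 < lamStar := by linarith [c1betaNorm_nonneg (β := β) (fun x => u x - lamStar)]
  have hτlam : 6 * lamStar * |τ| < 1 := by rwa [lt_div_iff₀ (by positivity), mul_comm] at hτ₁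
  have hu_bd := hu.abs_le_of_c1betaNorm_sub_const_le hunorm.le
  have hu_lip := hu.abs_sub_le_of_c1betaNorm_sub_const_le hunorm.le
  rw [abs_of_pos hlam] at hu_bd
  have hD := abs_Dlin_le hα₀ hτ (by linarith) hv.abs_le_c1betaNorm hu_bd
  have hD_sub := abs_Dlin_sub_le hα₀ hτ (by linarith) (by nlinarith [abs_nonneg τ])
    hu.1.continuous hv.1.continuous hv.abs_le_c1betaNorm hv.abs_sub_le_c1betaNorm_mul hu_bd hu_lip
  have hMT : 0 ≤ c1betaNorm β v * |τ| ^ (1 + α) := mul_nonneg (c1betaNorm_nonneg v) (by positivity)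
  refine ⟨fun s => (hD s).trans (by nlinarith), fun s s' => ?_⟩
  have hδ := norm_nonneg (s - s')
  refine le_mul_rpow_of_le_of_le_mul (by nlinarith) hδ (by linarith) (by linarith)
    ((abs_sub _ _).trans ?_) ((hD_sub s s').trans ?_)
  · nlinarith [hD s, hD s']
  · nlinarith [mul_nonneg hMT hδ, mul_nonneg hC (mul_nonneg hMT hδ)]

/-- uniform bounds for the linearization `D` of `𝓗` at `u` in direction `v`:
`|D(s)| ≤ c ‖v‖_{C^{1,β}} |τ|^{1+α}` and
`|D(s) - D(s̄)| ≤ c ‖v‖_{C^{1,β}} |τ|^{1+α} |s-s̄|^{β-α}`, with `c` depending only on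
`N, α, β, λ*`.  Here `N = m + 2 ≥ 2` and `τ₁ = 1/(6λ*)`. -/
theorem statement_16 (m : ℕ) (α β lamStar : ℝ) (hα : α ∈ Set.Ioo (0 : ℝ) 1)
    (hβ : β ∈ Set.Ioo α 1) (hl : 0 < lamStar) :
    ∃ c > 0, ∀ τ : ℝ, τ ≠ 0 → |τ| < 1 / (6 * lamStar) →
      ∀ u v : ES m → ℝ, IsC1Beta β u →
        c1betaNorm β (fun x => u x - lamStar) < lamStar / 2 → IsC1Beta β v →
        (∀ s : ES m, |Dlin m α τ u v s| ≤ c * c1betaNorm β v * |τ| ^ (1 + α)) ∧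
        ∀ s sbar : ES m,
          |Dlin m α τ u v s - Dlin m α τ u v sbar|
            ≤ c * c1betaNorm β v * |τ| ^ (1 + α) * ‖s - sbar‖ ^ (β - α) :=
  statement_16_general m α β lamStar hα hβ
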